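/- Let r > 0, p ≥ 1, m ∈ ℕ, let E = ℝ^m with the Euclidean inner product, K a finite-dimensional real inner product space, T : E → K linear, g ∈ K, γ > 0, and 0 < ε < r. Let B = p(r−ε)^{p−1}/(2ε) + 3((r−ε)^p − r^p)/(4ε²). Then for every ω ≥ γ|B| the function v ↦ J_p^ε(v) + ω‖v‖², where J_p^ε(v) = ‖Tv − g‖² + γ ∑_{i=1}^m W_r^{p,ε}(v_i), is convex; in particular J_p^ε is ω-semi-convex. -/

import Mathlib

/-!
Writing `‖v‖² = ∑ vᵢ²`, the function is `‖T v - g‖² + ∑ φ (vᵢ)` with `φ t = γ W(t) + ω t²`,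
so it suffices that `φ` is convex on `ℝ`. As `φ` is even, it is enough that `φ` is convex and
nondecreasing on `[0, ∞)`. There the profile of `W` is `C¹` (the cubic `π_p` meets `t ^ p` to first
order at `r - ε` and the constant `r ^ p` at `r + ε`), and `φ'` is monotone piece by piece: on the
cubic piece `φ'' = γ (6 A₀ (t - r - ε) + 2 B) + 2 ω ≥ 0` since `A₀ ≤ 0` and `ω ≥ -γ B`. Both
`A₀ ≤ 0` and `B ≤ 0` come from the tangent-line inequality
`(r - ε) ^ p + p ε (r - ε) ^ (p - 1) ≤ r ^ p`.
-/

/-- The smoothed truncated power potential `W_r^{p,ε}`. -/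
noncomputable def Wpot (r p ε t : ℝ) : ℝ :=
  if |t| ≤ r - ε then |t| ^ p
  else if |t| ≤ r + ε then
    (p * (r - ε) ^ (p - 1) / (12 * ε ^ 2) +
        (p * (r - ε) ^ (p - 1) / (2 * ε) +
          3 * ((r - ε) ^ p - r ^ p) / (4 * ε ^ 2)) / (3 * ε)) *
      (|t| - (r + ε)) ^ 3 +
    (p * (r - ε) ^ (p - 1) / (2 * ε) + 3 * ((r - ε) ^ p - r ^ p) / (4 * ε ^ 2)) *
      (|t| - (r + ε)) ^ 2 + r ^ p
  else r ^ p

open Set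

theorem ConvexOn.finset_sum {ι E : Type*} [AddCommMonoid E] [Module ℝ E] {s : Set E}
    {f : ι → E → ℝ} (t : Finset ι) (hs : Convex ℝ s) (hf : ∀ i ∈ t, ConvexOn ℝ s (f i)) :
    ConvexOn ℝ s fun x => ∑ i ∈ t, f i x := by
  classical
  induction t using Finset.induction_on with
  | empty => simpa using convexOn_const 0 hs
  | insert i t hi ih =>
    simp only [Finset.sum_insert hi]
    exact (hf i (t.mem_insert_self i)).add (ih fun j hj => hf j (Finset.mem_insert_of_mem hj))

theorem convexOn_univ_comp_norm {E : Type*} [SeminormedAddCommGroup E] [NormedSpace ℝ E]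
    {f : ℝ → ℝ} (hf : ConvexOn ℝ (Ici 0) f) (hf_mono : MonotoneOn f (Ici 0)) :
    ConvexOn ℝ univ fun x : E => f ‖x‖ := by
  refine ⟨convex_univ, fun x _ y _ a b ha hb hab => ?_⟩
  calc f ‖a • x + b • y‖ ≤ f (a * ‖x‖ + b * ‖y‖) := by
        refine hf_mono (norm_nonneg _) (mem_Ici.2 (by positivity)) ?_
        calc ‖a • x + b • y‖ ≤ ‖a • x‖ + ‖b • y‖ := norm_add_le _ _
          _ = a * ‖x‖ + b * ‖y‖ := by
            rw [norm_smul, norm_smul, Real.norm_of_nonneg ha, Real.norm_of_nonneg hb]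
    _ ≤ a • f ‖x‖ + b • f ‖y‖ := hf.2 (norm_nonneg x) (norm_nonneg y) ha hb hab

theorem convexOn_univ_comp_norm_of_hasDerivAt {E : Type*} [SeminormedAddCommGroup E]
    [NormedSpace ℝ E] {f f' : ℝ → ℝ} (hf : ∀ t, 0 ≤ t → HasDerivAt f (f' t) t)
    (hf'_mono : MonotoneOn f' (Ici 0)) (hf'_zero : 0 ≤ f' 0) :
    ConvexOn ℝ univ fun x : E => f ‖x‖ := by
  have hcont : ContinuousOn f (Ici 0) := fun t ht => (hf t ht).continuousAt.continuousWithinAt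
  have hdiff : DifferentiableOn ℝ f (interior (Ici 0)) := fun t ht =>
    (hf t (interior_subset ht)).differentiableAt.differentiableWithinAt
  have hderiv : EqOn (deriv f) f' (interior (Ici 0)) := fun t ht =>
    (hf t (interior_subset ht)).deriv
  refine convexOn_univ_comp_norm ?_ ?_
  · exact MonotoneOn.convexOn_of_deriv (convex_Ici 0) hcont hdiff
      ((hf'_mono.mono interior_subset).congr hderiv.symm)
  · refine monotoneOn_of_deriv_nonneg (convex_Ici 0) hcont hdiff fun t ht => ?_
    rw [hderiv ht]
    exact hf'_zero.trans (hf'_mono self_mem_Ici (interior_subset ht) (interior_subset ht))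

theorem convexOn_univ_norm_sub_sq {E F : Type*} [AddCommGroup E] [Module ℝ E]
    [SeminormedAddCommGroup F] [NormedSpace ℝ F] (T : E →ₗ[ℝ] F) (g : F) :
    ConvexOn ℝ univ fun v => ‖T v - g‖ ^ 2 :=
  (convexOn_univ_comp_norm (convexOn_pow 2) (fun _ hx _ _ hxy => pow_le_pow_left₀ hx hxy 2)
    ).comp_affineMap (T.toAffineMap - AffineMap.const ℝ E g)

theorem hasDerivAt_ite_le {f g : ℝ → ℝ} {f' g' a x : ℝ} (hf : HasDerivAt f f' x)
    (hg : HasDerivAt g g' x) (hfg : x = a → f a = g a ∧ f' = g') :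
    HasDerivAt (fun t => if t ≤ a then f t else g t) (if x ≤ a then f' else g') x := by
  rcases lt_trichotomy x a with hxa | rfl | hax
  · rw [if_pos hxa.le]
    refine hf.congr_of_eventuallyEq ?_
    filter_upwards [Iio_mem_nhds hxa] with t ht using if_pos (le_of_lt ht)
  · obtain ⟨hval, rfl⟩ := hfg rfl
    rw [if_pos le_rfl]
    have hleft : HasDerivWithinAt (fun t => if t ≤ x then f t else g t) f' (Iic x) x :=
      hf.hasDerivWithinAt.congr (fun t ht => if_pos ht) (if_pos le_rfl)
    have hright : HasDerivWithinAt (fun t => if t ≤ x then f t else g t) f' (Ici x) x := by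
      refine hg.hasDerivWithinAt.congr (fun t ht => ?_) (by rw [if_pos le_rfl, hval])
      rcases eq_or_lt_of_le (mem_Ici.1 ht) with rfl | ht
      · rw [if_pos le_rfl, hval]
      · exact if_neg (not_le.mpr ht)
    simpa [Iic_union_Ici] using hleft.union hright
  · rw [if_neg (not_le.mpr hax)]
    refine hg.congr_of_eventuallyEq ?_
    filter_upwards [Ioi_mem_nhds hax] with t ht using if_neg (not_le.mpr ht)

theorem rpow_add_mul_rpow_sub_one_le {s h p : ℝ} (hs : 0 < s) (hh : -s ≤ h) (hp : 1 ≤ p) :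
    s ^ p + p * s ^ (p - 1) * h ≤ (s + h) ^ p := by
  have hhs : -1 ≤ h / s := by rwa [le_div_iff₀ hs, neg_one_mul]
  have hbern : 1 + p * (h / s) ≤ (1 + h / s) ^ p := one_add_mul_self_le_rpow_one_add hhs hp
  calc s ^ p + p * s ^ (p - 1) * h = (1 + p * (h / s)) * s ^ p := by
        rw [Real.rpow_sub_one hs.ne']
        field_simp
    _ ≤ (1 + h / s) ^ p * s ^ p := by gcongr
    _ = (s + h) ^ p := by
        rw [← Real.mul_rpow (by linarith) hs.le]
        congr 1; field_simp

namespace Wpot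

/- `B`, `A` and `cubic` are the paper's `B`, `A₀` and `π_p`. -/

variable (r p ε : ℝ)

noncomputable def B : ℝ :=
  p * (r - ε) ^ (p - 1) / (2 * ε) + 3 * ((r - ε) ^ p - r ^ p) / (4 * ε ^ 2)

noncomputable def A : ℝ := p * (r - ε) ^ (p - 1) / (12 * ε ^ 2) + B r p ε / (3 * ε)

noncomputable def cubic (t : ℝ) : ℝ :=
  A r p ε * (t - (r + ε)) ^ 3 + B r p ε * (t - (r + ε)) ^ 2 + r ^ p

noncomputable def cubicDeriv (t : ℝ) : ℝ :=
  3 * A r p ε * (t - (r + ε)) ^ 2 + 2 * B r p ε * (t - (r + ε))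

noncomputable def radial (t : ℝ) : ℝ :=
  if t ≤ r - ε then t ^ p else if t ≤ r + ε then cubic r p ε t else r ^ p

noncomputable def radialDeriv (t : ℝ) : ℝ :=
  if t ≤ r - ε then p * t ^ (p - 1) else if t ≤ r + ε then cubicDeriv r p ε t else 0

theorem eq_radial_abs (t : ℝ) : Wpot r p ε t = radial r p ε |t| := rfl

theorem hasDerivAt_cubic (t : ℝ) : HasDerivAt (cubic r p ε) (cubicDeriv r p ε t) t := by
  have hu : HasDerivAt (fun u : ℝ => u - (r + ε)) 1 t := (hasDerivAt_id t).sub_const _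
  have h := (((hu.pow 3).const_mul (A r p ε)).add ((hu.pow 2).const_mul (B r p ε))).add_const
    (r ^ p)
  exact h.congr_deriv (by simp only [cubicDeriv]; push_cast; ring)

variable {r p ε}

theorem cubic_sub (hε : ε ≠ 0) : cubic r p ε (r - ε) = (r - ε) ^ p := by
  simp only [cubic, A, B]
  field_simp
  ring

theorem cubicDeriv_sub (hε : ε ≠ 0) : cubicDeriv r p ε (r - ε) = p * (r - ε) ^ (p - 1) := by
  simp only [cubicDeriv, A, B]
  field_simp
  ring

theorem four_mul_mul_B_le (hp : 1 ≤ p) (hε : 0 < ε) (hεr : ε < r) :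
    4 * ε * B r p ε ≤ -(p * (r - ε) ^ (p - 1)) := by
  have htangent := rpow_add_mul_rpow_sub_one_le (h := ε) (by linarith : 0 < r - ε) (by linarith) hp
  rw [sub_add_cancel] at htangent
  have hB : 4 * ε * B r p ε * ε = 2 * ε * (p * (r - ε) ^ (p - 1)) + 3 * ((r - ε) ^ p - r ^ p) := by
    simp only [B]; field_simp; ring
  nlinarith

theorem B_nonpos (hp : 1 ≤ p) (hε : 0 < ε) (hεr : ε < r) : B r p ε ≤ 0 := by
  have hB := four_mul_mul_B_le hp hε hεr
  have hq : 0 ≤ p * (r - ε) ^ (p - 1) := by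
    have := sub_pos.2 hεr
    positivity
  nlinarith

theorem A_nonpos (hp : 1 ≤ p) (hε : 0 < ε) (hεr : ε < r) : A r p ε ≤ 0 := by
  have hB := four_mul_mul_B_le hp hε hεr
  have hA : A r p ε * (12 * ε ^ 2) = p * (r - ε) ^ (p - 1) + 4 * ε * B r p ε := by
    simp only [A]; field_simp; ring
  nlinarith [sq_pos_of_pos hε]

theorem hasDerivAt_radial (hp : 1 ≤ p) (hε : 0 < ε) (t : ℝ) :
    HasDerivAt (radial r p ε) (radialDeriv r p ε t) t := by
  have hupper := hasDerivAt_ite_le (hasDerivAt_cubic r p ε t) (hasDerivAt_const t (r ^ p))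
    (a := r + ε) fun ht => ⟨by simp [cubic], by simp [ht, cubicDeriv]⟩
  refine hasDerivAt_ite_le (Real.hasDerivAt_rpow_const (Or.inr hp)) hupper fun ht => ?_
  subst ht
  rw [if_pos (by linarith), if_pos (by linarith), cubic_sub hε.ne', cubicDeriv_sub hε.ne']
  exact ⟨rfl, rfl⟩

theorem monotoneOn_radialDeriv (hp : 1 ≤ p) (hε : 0 < ε) (hεr : ε < r) {γ ω : ℝ} (hγ : 0 ≤ γ)
    (hω : γ * -B r p ε ≤ ω) :
    MonotoneOn (fun t => γ * radialDeriv r p ε t + 2 * ω * t) (Ici 0) := by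
  have hB := B_nonpos hp hε hεr
  have hA := A_nonpos hp hε hεr
  have hω0 : 0 ≤ ω := by nlinarith
  have hpow : MonotoneOn (fun t => γ * radialDeriv r p ε t + 2 * ω * t) (Icc 0 (r - ε)) := by
    intro x hx y hy hxy
    simp only [radialDeriv, if_pos hx.2, if_pos hy.2]
    have := Real.rpow_le_rpow hx.1 hxy (by linarith : 0 ≤ p - 1)
    gcongr
  have hcubic : MonotoneOn (fun t => γ * radialDeriv r p ε t + 2 * ω * t)
      (Icc (r - ε) (r + ε)) := by
    have heq : EqOn (radialDeriv r p ε) (cubicDeriv r p ε) (Icc (r - ε) (r + ε)) := by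
      intro t ht
      rcases eq_or_lt_of_le ht.1 with rfl | hlt
      · rw [radialDeriv, if_pos le_rfl, cubicDeriv_sub hε.ne']
      · rw [radialDeriv, if_neg (not_le.2 hlt), if_pos ht.2]
    intro x hx y hy hxy
    simp only [heq hx, heq hy, cubicDeriv]
    nlinarith [mul_nonneg (sub_nonneg.2 hxy)
        (mul_nonneg (mul_nonneg hγ (neg_nonneg.2 hA))
          (by linarith [hy.2] : 0 ≤ 2 * (r + ε) - x - y)),
      mul_nonneg (sub_nonneg.2 hxy) (by linarith : 0 ≤ ω + γ * B r p ε)]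
  have hflat : MonotoneOn (fun t => γ * radialDeriv r p ε t + 2 * ω * t) (Ici (r + ε)) := by
    have heq : EqOn (radialDeriv r p ε) 0 (Ici (r + ε)) := by
      intro t ht
      rcases eq_or_lt_of_le (mem_Ici.1 ht) with rfl | hlt
      · simp [radialDeriv, cubicDeriv, if_neg (by linarith : ¬r + ε ≤ r - ε)]
      · rw [radialDeriv, if_neg (by linarith), if_neg (not_le.2 hlt), Pi.zero_apply]
    intro x hx y hy hxy
    simp only [heq hx, heq hy, Pi.zero_apply]
    gcongr
  have hbounded :=
    hpow.union_right hcubic (isGreatest_Icc (by linarith)) (isLeast_Icc (by linarith))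
  rw [Icc_union_Icc_eq_Icc (by linarith) (by linarith)] at hbounded
  rw [← Icc_union_Ici_eq_Ici (by linarith : (0 : ℝ) ≤ r + ε)]
  exact hbounded.union_right hflat (isGreatest_Icc (by linarith)) isLeast_Ici

end Wpot

theorem convexOn_univ_Wpot {r p ε γ ω : ℝ} (hp : 1 ≤ p) (hε : 0 < ε) (hεr : ε < r) (hγ : 0 ≤ γ)
    (hω : γ * -Wpot.B r p ε ≤ ω) : ConvexOn ℝ univ fun t => γ * Wpot r p ε t + ω * t ^ 2 := by
  have hderiv (t : ℝ) : HasDerivAt (fun t => γ * Wpot.radial r p ε t + ω * t ^ 2)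
      (γ * Wpot.radialDeriv r p ε t + 2 * ω * t) t :=
    (((Wpot.hasDerivAt_radial hp hε t).const_mul γ).add ((hasDerivAt_pow 2 t).const_mul ω)
      ).congr_deriv (by push_cast; ring)
  have hzero : 0 ≤ γ * Wpot.radialDeriv r p ε 0 + 2 * ω * 0 := by
    rw [Wpot.radialDeriv, if_pos (by linarith), mul_zero, add_zero]
    exact mul_nonneg hγ (mul_nonneg (by linarith) (Real.rpow_nonneg le_rfl _))
  simpa only [Wpot.eq_radial_abs, Real.norm_eq_abs, sq_abs] using
    convexOn_univ_comp_norm_of_hasDerivAt (E := ℝ) (fun t _ => hderiv t)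
      (Wpot.monotoneOn_radialDeriv hp hε hεr hγ hω) hzero

theorem statement11_general (r p : ℝ) (hp : 1 ≤ p) (m : ℕ)
    {K : Type*} [NormedAddCommGroup K] [InnerProductSpace ℝ K]
    (T : EuclideanSpace ℝ (Fin m) →ₗ[ℝ] K) (g : K) (γ ε : ℝ)
    (hγ : 0 < γ) (hε0 : 0 < ε) (hεr : ε < r) (ω : ℝ)
    (hω : γ * |p * (r - ε) ^ (p - 1) / (2 * ε) +
        3 * ((r - ε) ^ p - r ^ p) / (4 * ε ^ 2)| ≤ ω) :
    ConvexOn ℝ Set.univ (fun v : EuclideanSpace ℝ (Fin m) =>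
      (‖T v - g‖ ^ 2 + γ * ∑ i, Wpot r p ε (v i)) + ω * ‖v‖ ^ 2) := by
  change γ * |Wpot.B r p ε| ≤ ω at hω
  rw [abs_of_nonpos (Wpot.B_nonpos hp hε0 hεr)] at hω
  have hsplit : (fun v : EuclideanSpace ℝ (Fin m) =>
      (‖T v - g‖ ^ 2 + γ * ∑ i, Wpot r p ε (v i)) + ω * ‖v‖ ^ 2) =
      fun v => ‖T v - g‖ ^ 2 + ∑ i, (γ * Wpot r p ε (v i) + ω * v i ^ 2) := by
    funext v
    rw [EuclideanSpace.real_norm_sq_eq, Finset.sum_add_distrib, ← Finset.mul_sum, ← Finset.mul_sum]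
    ring
  rw [hsplit]
  refine (convexOn_univ_norm_sub_sq T g).add (ConvexOn.finset_sum _ convex_univ fun i _ => ?_)
  exact (convexOn_univ_Wpot hp hε0 hεr hγ.le hω).comp_linearMap (EuclideanSpace.proj i).toLinearMap

/-- With `B = p(r−ε)^{p−1}/(2ε) + 3((r−ε)^p − r^p)/(4ε²)`, for every
`ω ≥ γ|B|` the function `v ↦ J_p^ε(v) + ω‖v‖²` is convex; i.e. `J_p^ε` is
`ω`-semi-convex. -/
theorem statement11 (r p : ℝ) (hr : 0 < r) (hp : 1 ≤ p) (m : ℕ)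
    {K : Type*} [NormedAddCommGroup K] [InnerProductSpace ℝ K] [FiniteDimensional ℝ K]
    (T : EuclideanSpace ℝ (Fin m) →ₗ[ℝ] K) (g : K) (γ ε : ℝ)
    (hγ : 0 < γ) (hε0 : 0 < ε) (hεr : ε < r) (ω : ℝ)
    (hω : γ * |p * (r - ε) ^ (p - 1) / (2 * ε) +
        3 * ((r - ε) ^ p - r ^ p) / (4 * ε ^ 2)| ≤ ω) :
    ConvexOn ℝ Set.univ (fun v : EuclideanSpace ℝ (Fin m) =>
      (‖T v - g‖ ^ 2 + γ * ∑ i, Wpot r p ε (v i)) + ω * ‖v‖ ^ 2) :=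
  statement11_general r p hp m T g γ ε hγ hε0 hεr ω hω
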